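/- arXiv:1907.11359 — 8 statements merged into one kernel-verified Lean document; each statement's English description precedes it below -/
import Mathlib

section
/- Let g(x) = 1 - ∑_{k≥1} a_k x^k with all a_k ≥ 0, and suppose g(x) > 0 for all x ∈ (-1,1). Then for every x ∈ [0,1), g(x)/g(-x) ≤ (1 - a_1 x)/(1 + a_1 x). -/
/-!
Write `S(x) = ∑_{k ≥ 1} a_k x^k` and `c = a_1 x ≥ 0`. Clearing the (positive) denominators, the
inequality becomes `2c - (S(x) - S(-x)) ≤ c (S(x) + S(-x))`. With nonnegative coefficients the odd
part `S(x) - S(-x)` dominates its first term `2c`, and the even part `S(x) + S(-x)` is nonnegative.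
-/

section NonnegCoeffSeries

variable {b : ℕ → ℝ} {x : ℝ}

lemma abs_neg_pow_of_nonneg (hx : 0 ≤ x) (n : ℕ) : |(-x) ^ n| = x ^ n := by
  rw [abs_pow, abs_neg, abs_of_nonneg hx]

lemma tsum_mul_pow_succ_add_tsum_mul_neg_pow_succ_nonneg (hb : ∀ k, 0 ≤ b k) (hx : 0 ≤ x)
    (hs : Summable fun k => b k * x ^ (k + 1)) (hs' : Summable fun k => b k * (-x) ^ (k + 1)) :
    0 ≤ ∑' k, b k * x ^ (k + 1) + ∑' k, b k * (-x) ^ (k + 1) := by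
  rw [← hs.tsum_add hs']
  refine tsum_nonneg fun k => ?_
  have h := (abs_le.mp (abs_neg_pow_of_nonneg hx (k + 1)).le).1
  rw [← mul_add]
  exact mul_nonneg (hb k) (by linarith)

lemma two_mul_le_tsum_mul_pow_succ_sub_tsum_mul_neg_pow_succ (hb : ∀ k, 0 ≤ b k) (hx : 0 ≤ x)
    (hs : Summable fun k => b k * x ^ (k + 1)) (hs' : Summable fun k => b k * (-x) ^ (k + 1)) :
    2 * (b 0 * x) ≤ ∑' k, b k * x ^ (k + 1) - ∑' k, b k * (-x) ^ (k + 1) := by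
  rw [← hs.tsum_sub hs']
  have hterm : ∀ k, 0 ≤ b k * x ^ (k + 1) - b k * (-x) ^ (k + 1) := fun k => by
    have h := (abs_le.mp (abs_neg_pow_of_nonneg hx (k + 1)).le).2
    rw [← mul_sub]
    exact mul_nonneg (hb k) (by linarith)
  calc 2 * (b 0 * x) = b 0 * x ^ (0 + 1) - b 0 * (-x) ^ (0 + 1) := by ring
    _ ≤ _ := (hs.sub hs').le_tsum 0 fun k _ => hterm k

end NonnegCoeffSeries

lemma one_sub_div_one_sub_le_one_sub_div_one_add {s t c : ℝ} (hc : 0 ≤ c) (ht : 0 < 1 - t)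
    (hodd : 2 * c ≤ s - t) (heven : 0 ≤ s + t) :
    (1 - s) / (1 - t) ≤ (1 - c) / (1 + c) := by
  rw [div_le_div_iff₀ ht (by linarith)]
  nlinarith [mul_nonneg hc heven]

theorem stmt_1 (a : ℕ → ℝ) (g : ℝ → ℝ)
    (ha : ∀ k, 0 ≤ a k)
    (hsum : ∀ x ∈ Set.Ioo (-1:ℝ) 1, Summable (fun k : ℕ => a (k + 1) * x ^ (k + 1)))
    (hg : ∀ x ∈ Set.Ioo (-1:ℝ) 1, g x = 1 - ∑' k : ℕ, a (k + 1) * x ^ (k + 1))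
    (hpos : ∀ x ∈ Set.Ioo (-1:ℝ) 1, 0 < g x) :
    ∀ x ∈ Set.Ico (0:ℝ) 1, g x / g (-x) ≤ (1 - a 1 * x) / (1 + a 1 * x) := by
  rintro x ⟨hx0, hx1⟩
  have hx : x ∈ Set.Ioo (-1:ℝ) 1 := ⟨by linarith, hx1⟩
  have hx' : -x ∈ Set.Ioo (-1:ℝ) 1 := ⟨by linarith, by linarith⟩
  have hb : ∀ k, 0 ≤ a (k + 1) := fun k => ha (k + 1)
  have hpos' := hpos (-x) hx'
  rw [hg (-x) hx'] at hpos'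
  rw [hg x hx, hg (-x) hx']
  exact one_sub_div_one_sub_le_one_sub_div_one_add (mul_nonneg (ha 1) hx0) hpos'
    (two_mul_le_tsum_mul_pow_succ_sub_tsum_mul_neg_pow_succ hb hx0 (hsum x hx) (hsum (-x) hx'))
    (tsum_mul_pow_succ_add_tsum_mul_neg_pow_succ_nonneg hb hx0 (hsum x hx) (hsum (-x) hx'))
end

section
/- Let p ≥ 2, y ≥ 0, and a, b ∈ ℝ with |cos b| ≥ |cos a|. Then (y²+1+2y·cos b)^{p/2} + (y²+1-2y·cos b)^{p/2} ≥ (y²+1+2y·cos a)^{p/2} + (y²+1-2y·cos a)^{p/2}. -/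
/-!
With `A = y² + 1`, each side has the form `f (A + u) + f (A - u)` for the convex function
`f t = t ^ (p / 2)`, and such a symmetric sum grows with `|u|` as long as `A ± u` stay in the
domain of convexity; here `|2 y cos a| ≤ |2 y cos b| ≤ 2 y ≤ A`.
-/

theorem ConvexOn.map_add_add_map_sub_le {s : Set ℝ} {f : ℝ → ℝ} (hf : ConvexOn ℝ s f)
    {a u v : ℝ} (huv : |u| ≤ |v|) (hav : a + v ∈ s) (hav' : a - v ∈ s) :
    f (a + u) + f (a - u) ≤ f (a + v) + f (a - v) := by
  rcases eq_or_ne v 0 with rfl | hv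
  · rw [abs_zero, abs_nonpos_iff] at huv
    simp [huv]
  -- `a ± u` are the convex combinations of `a ± v` with weights `(1 ± r) / 2` and `(1 ∓ r) / 2`.
  set r := u / v
  have hu : u = r * v := (div_mul_cancel₀ u hv).symm
  obtain ⟨hr₁, hr₂⟩ : -1 ≤ r ∧ r ≤ 1 := abs_le.mp <| by
    rw [abs_div]; exact div_le_one_of_le₀ huv (abs_nonneg v)
  have hplus := hf.2 hav hav' (by linarith : 0 ≤ (1 + r) / 2) (by linarith : 0 ≤ (1 - r) / 2)
    (by ring)
  have hminus := hf.2 hav hav' (by linarith : 0 ≤ (1 - r) / 2) (by linarith : 0 ≤ (1 + r) / 2)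
    (by ring)
  simp only [smul_eq_mul] at hplus hminus
  rw [show (1 + r) / 2 * (a + v) + (1 - r) / 2 * (a - v) = a + u by rw [hu]; ring] at hplus
  rw [show (1 - r) / 2 * (a + v) + (1 + r) / 2 * (a - v) = a - u by rw [hu]; ring] at hminus
  linarith

theorem stmt_4 (p y a b : ℝ) (hp : 2 ≤ p) (hy : 0 ≤ y)
    (hab : |Real.cos a| ≤ |Real.cos b|) :
    (y ^ 2 + 1 + 2 * y * Real.cos a) ^ (p / 2) + (y ^ 2 + 1 - 2 * y * Real.cos a) ^ (p / 2)
      ≤ (y ^ 2 + 1 + 2 * y * Real.cos b) ^ (p / 2)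
        + (y ^ 2 + 1 - 2 * y * Real.cos b) ^ (p / 2) := by
  have hcos : |2 * y * Real.cos a| ≤ |2 * y * Real.cos b| := by
    rw [abs_mul, abs_mul (2 * y)]
    gcongr
  have hb : |2 * y * Real.cos b| ≤ y ^ 2 + 1 := by
    calc |2 * y * Real.cos b| ≤ 2 * y := by
          rw [abs_mul, abs_of_nonneg (by positivity)]
          exact mul_le_of_le_one_right (by positivity) (Real.abs_cos_le_one b)
      _ ≤ y ^ 2 + 1 := by nlinarith [sq_nonneg (y - 1)]
  refine (convexOn_rpow (by linarith)).map_add_add_map_sub_le hcos ?_ ?_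
  · exact Set.mem_Ici.mpr (by linarith [neg_abs_le (2 * y * Real.cos b)])
  · exact Set.mem_Ici.mpr (by linarith [le_abs_self (2 * y * Real.cos b)])
end

section
/- For p ≥ 3 and u ∈ ℝ with u ≥ 0, b ∈ [1/(p-1), 1], and 1 - u(p-2)√(1-b) > 0, one has ((1+bu²(p-2)-2u√(1-b))/(1+bu²(p-2)+2u√(1-b)))^{p/2-1} ≥ (1-u(p-2)√(1-b))/(1+u(p-2)√(1-b)). -/
/-!
Put `s = u √(1 - b)`, `β = p - 2 ≥ 1` and `A = 1 + b u² (p - 2)`. The left side is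
`(1 - β s) / (1 + β s)`, and this is at most `((1 - s) / (1 + s)) ^ β`: the function
`(1 - x) ^ β (1 + β x) - (1 + x) ^ β (1 - β x)` vanishes at `0` and has derivative
`β (β + 1) x ((1 + x) ^ (β - 1) - (1 - x) ^ (β - 1)) ≥ 0` on `[0, 1)`.
Since `((1 - s) / (1 + s)) ^ β = (((1 - s) / (1 + s)) ^ 2) ^ (p / 2 - 1)`, it remains to compare
`((1 - s) / (1 + s)) ^ 2 = (1 + s² - 2 s) / (1 + s² + 2 s)` with `(A - 2 s) / (A + 2 s)`.
As `t ↦ (t - 2 s) / (t + 2 s)` is increasing, this follows from `A ≥ 1 + s² = 1 + u² (1 - b)`,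
which is exactly `b (p - 1) ≥ 1`.
-/

open Real Set

theorem hasDerivAt_one_add_mul_rpow_mul_one_sub_mul {β : ℝ} (hβ : 1 ≤ β) (c : ℝ) {x : ℝ}
    (hx : 0 < 1 + c * x) :
    HasDerivAt (fun x => (1 + c * x) ^ β * (1 - c * β * x))
      (-(c ^ 2 * β * (β + 1) * x * (1 + c * x) ^ (β - 1))) x := by
  have hlin : HasDerivAt (fun x => 1 + c * x) c x := by
    simpa using ((hasDerivAt_id x).const_mul c).const_add 1
  have hlin' : HasDerivAt (fun x => 1 - c * β * x) (-(c * β)) x := by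
    simpa using ((hasDerivAt_id x).const_mul (c * β)).const_sub 1
  refine ((hlin.rpow_const (Or.inr hβ)).mul hlin').congr_deriv ?_
  rw [rpow_sub_one hx.ne']
  field_simp
  ring

theorem one_add_rpow_mul_one_sub_mul_le {β s : ℝ} (hβ : 1 ≤ β) (hs₀ : 0 ≤ s) (hs₁ : s < 1) :
    (1 + s) ^ β * (1 - β * s) ≤ (1 - s) ^ β * (1 + β * s) := by
  let F : ℝ → ℝ → ℝ := fun c x => (1 + c * x) ^ β * (1 - c * β * x)
  have hF : ∀ c, |c| = 1 → ∀ x ∈ Icc 0 s,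
      HasDerivAt (F c) (-(β * (β + 1) * x * (1 + c * x) ^ (β - 1))) x := by
    intro c hc x hx
    have hcx : |c * x| < 1 := by rw [abs_mul, hc, one_mul, abs_of_nonneg hx.1]; linarith [hx.2]
    have hc2 : c ^ 2 = 1 := by rw [← sq_abs, hc, one_pow]
    simpa [hc2] using hasDerivAt_one_add_mul_rpow_mul_one_sub_mul hβ c
      (x := x) (by linarith [neg_abs_le (c * x)])
  have hD : ∀ x ∈ Icc 0 s, HasDerivAt (fun x => F (-1) x - F 1 x)
      (β * (β + 1) * x * ((1 + x) ^ (β - 1) - (1 - x) ^ (β - 1))) x := fun x hx =>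
    ((hF (-1) (by simp) x hx).sub (hF 1 (by simp) x hx)).congr_deriv
      (by rw [one_mul, neg_one_mul, ← sub_eq_add_neg]; ring)
  have hmono : MonotoneOn (fun x => F (-1) x - F 1 x) (Icc 0 s) := by
    refine monotoneOn_of_hasDerivWithinAt_nonneg (convex_Icc 0 s)
      (fun x hx => (hD x hx).continuousAt.continuousWithinAt)
      (fun x hx => (hD x (interior_subset hx)).hasDerivWithinAt) fun x hx => ?_
    rw [interior_Icc] at hx
    have hle : (1 - x) ^ (β - 1) ≤ (1 + x) ^ (β - 1) :=
      rpow_le_rpow (by linarith [hx.2]) (by linarith [hx.1]) (by linarith)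
    have hx₀ : 0 ≤ x := hx.1.le
    exact mul_nonneg (by positivity) (sub_nonneg.2 hle)
  have := hmono ⟨le_rfl, hs₀⟩ ⟨hs₀, le_rfl⟩ hs₀
  simp only [F] at this
  norm_num [← sub_eq_add_neg] at this
  linarith

theorem one_sub_mul_div_one_add_mul_le_rpow {β s : ℝ} (hβ : 1 ≤ β) (hs₀ : 0 ≤ s) (hs₁ : s < 1) :
    (1 - β * s) / (1 + β * s) ≤ ((1 - s) / (1 + s)) ^ β := by
  rw [div_rpow (by linarith) (by linarith),
    div_le_div_iff₀ (by nlinarith) (rpow_pos_of_pos (by linarith) β)]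
  linarith [one_add_rpow_mul_one_sub_mul_le hβ hs₀ hs₁]

theorem div_sq_le_sub_div_add {s A : ℝ} (hs : 0 ≤ s) (hA : 1 + s ^ 2 ≤ A) :
    ((1 - s) / (1 + s)) ^ 2 ≤ (A - 2 * s) / (A + 2 * s) := by
  rw [div_pow, div_le_div_iff₀ (pow_pos (by linarith) 2) (by nlinarith)]
  nlinarith [mul_nonneg hs (sub_nonneg.2 hA)]

theorem stmt_5 (p u b : ℝ) (hp : 3 ≤ p) (hu : 0 ≤ u)
    (hb : b ∈ Set.Icc (1 / (p - 1)) 1)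
    (hpos : 0 < 1 - u * (p - 2) * Real.sqrt (1 - b)) :
    (1 - u * (p - 2) * Real.sqrt (1 - b)) / (1 + u * (p - 2) * Real.sqrt (1 - b))
      ≤ ((1 + b * u ^ 2 * (p - 2) - 2 * u * Real.sqrt (1 - b)) /
          (1 + b * u ^ 2 * (p - 2) + 2 * u * Real.sqrt (1 - b))) ^ (p / 2 - 1) := by
  rw [show u * (p - 2) * √(1 - b) = (p - 2) * (u * √(1 - b)) by ring] at hpos ⊢
  rw [mul_assoc 2]
  set s := u * √(1 - b) with hs
  set A := 1 + b * u ^ 2 * (p - 2)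
  have hs₀ : 0 ≤ s := by positivity
  have hs₁ : s < 1 := by nlinarith
  have hA : 1 + s ^ 2 ≤ A := by
    have hb' : 1 ≤ b * (p - 1) := by rw [← div_le_iff₀ (by linarith)]; exact hb.1
    rw [hs, mul_pow, sq_sqrt (by linarith [hb.2])]
    nlinarith [sq_nonneg u]
  calc (1 - (p - 2) * s) / (1 + (p - 2) * s)
      ≤ ((1 - s) / (1 + s)) ^ (p - 2) :=
      one_sub_mul_div_one_add_mul_le_rpow (by linarith) hs₀ hs₁
    _ = (((1 - s) / (1 + s)) ^ 2) ^ (p / 2 - 1) := by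
      rw [← rpow_natCast_mul (div_nonneg (by linarith) (by linarith))]
      ring_nf
    _ ≤ ((A - 2 * s) / (A + 2 * s)) ^ (p / 2 - 1) :=
      rpow_le_rpow (by positivity) (div_sq_le_sub_div_add hs₀ hA) (by linarith)
end

section
/- For p ≥ 3, u ∈ ℝ, and b ∈ [1/(p-1), 1], the map b ↦ (1+bu²(p-2)+2u√(1-b))^{p/2} + (1+bu²(p-2)-2u√(1-b))^{p/2} is monotonically nondecreasing on [1/(p-1), 1]. -/
/-!
In the variable `s = √(1 - b)` the function becomes `(c + t) ^ (p/2) + (c - t) ^ (p/2)` with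
`c = 1 + (1 - s²) u² (p - 2)` and `t = 2us`, and `b ≥ 1/(p - 1)` becomes `c ≥ 1 + t²/4`.
It suffices that this decreases in `s`. With `q = p/2 - 1`, `A = (c + t) ^ q`, `B = (c - t) ^ q`,
`2s` times the `s`-derivative is `-p (q t² (A + B) - t (A - B))`, so we need
`t (A - B) ≤ q t² (A + B)`; by symmetry `t ≥ 0`, and `t ≥ 2` is trivial. For `t < 2`,
`(A - B)/(A + B) = tanh (q log ((c + t)/(c - t)) / 2)`, and `c ≥ 1 + t²/4` gives
`(c + t)/(c - t) ≤ ((2 + t)/(2 - t))² = exp (4 artanh (t/2))`; so the ratio is at most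
`tanh (2q artanh (t/2)) ≤ 2q · t/2`, using `tanh (m x) ≤ m tanh x` for `m ≥ 1`, `x ≥ 0`.
-/

open Real Set

namespace Real

lemma hasDerivAt_tanh (x : ℝ) : HasDerivAt tanh (1 / cosh x ^ 2) x := by
  have hquot : tanh = fun y => sinh y / cosh y := funext tanh_eq_sinh_div_cosh
  rw [hquot]
  refine ((hasDerivAt_sinh x).div (hasDerivAt_cosh x) (cosh_pos x).ne').congr_deriv ?_
  rw [← cosh_sq_sub_sinh_sq x]; ring

lemma tanh_monotone : Monotone tanh :=
  monotone_of_hasDerivAt_nonneg hasDerivAt_tanh fun x => by positivity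

lemma tanh_half (z : ℝ) : tanh (z / 2) = (exp z - 1) / (exp z + 1) := by
  have hz : exp z = exp (z / 2) ^ 2 := by rw [← exp_nat_mul]; ring_nf
  rw [tanh_eq, hz, exp_neg]
  field_simp

lemma tanh_mul_le_mul_tanh {m x : ℝ} (hm : 1 ≤ m) (hx : 0 ≤ x) :
    tanh (m * x) ≤ m * tanh x := by
  set g' : ℝ → ℝ := fun y => m * (1 / cosh y ^ 2) - 1 / cosh (m * y) ^ 2 * m
  have hderiv (y : ℝ) : HasDerivAt (fun y => m * tanh y - tanh (m * y)) (g' y) y :=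
    ((hasDerivAt_tanh y).const_mul m).sub
      ((hasDerivAt_tanh (m * y)).comp y
        ((hasDerivAt_id y).const_mul m |>.congr_deriv (mul_one m)))
  have hmono : MonotoneOn (fun y => m * tanh y - tanh (m * y)) (Ici 0) := by
    refine monotoneOn_of_hasDerivWithinAt_nonneg (convex_Ici 0)
      (fun y _ => (hderiv y).continuousAt.continuousWithinAt)
      (fun y _ => (hderiv y).hasDerivWithinAt) fun y hy => ?_
    rw [interior_Ici, mem_Ioi] at hy
    have hcosh : cosh y ≤ cosh (m * y) := cosh_le_cosh.2 (by
      rw [abs_of_pos hy, abs_of_pos (by positivity)]; nlinarith)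
    have := one_div_le_one_div_of_le (by positivity) (pow_le_pow_left₀ (cosh_pos y).le hcosh 2)
    simp only [g']
    nlinarith
  simpa using hmono self_mem_Ici hx hx

end Real

lemma rpow_sub_rpow_div_rpow_add_rpow_eq_tanh {a b : ℝ} (ha : 0 < a) (hb : 0 < b) (q : ℝ) :
    (a ^ q - b ^ q) / (a ^ q + b ^ q) = tanh (log (a / b) * q / 2) := by
  rw [tanh_half, ← rpow_def_of_pos (div_pos ha hb), div_rpow ha.le hb.le]
  have : 0 < b ^ q := rpow_pos_of_pos hb q
  field_simp

lemma rpow_add_sub_rpow_sub_le {q t c : ℝ} (hq : 1 / 2 ≤ q) (ht : 0 ≤ t)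
    (hc : 1 + t ^ 2 / 4 ≤ c) :
    (c + t) ^ q - (c - t) ^ q ≤ q * t * ((c + t) ^ q + (c - t) ^ q) := by
  have hX : 0 ≤ (c + t) ^ q := rpow_nonneg (by nlinarith) q
  have hY : 0 ≤ (c - t) ^ q := rpow_nonneg (by nlinarith [sq_nonneg (t - 2)]) q
  rcases le_or_gt 2 t with h2t | ht2
  · nlinarith [mul_nonneg (show 0 ≤ q * t - 1 by nlinarith) (add_nonneg hX hY)]
  have hsub : 0 < c - t := by nlinarith [sq_nonneg (2 - t)]
  have hx : t / 2 ∈ Ioo (-1) 1 := ⟨by linarith, by linarith⟩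
  have hratio : (c + t) / (c - t) ≤ ((1 + t / 2) / (1 - t / 2)) ^ 2 := by
    rw [div_pow, div_le_div_iff₀ hsub (by nlinarith)]
    nlinarith
  have hlog : log ((c + t) / (c - t)) ≤ 4 * artanh (t / 2) := by
    rw [artanh_eq_half_log (Ioo_subset_Icc_self hx)]
    linarith [log_le_log (div_pos (by linarith) hsub) hratio, log_pow ((1 + t / 2) / (1 - t / 2)) 2]
  have htanh : ((c + t) ^ q - (c - t) ^ q) / ((c + t) ^ q + (c - t) ^ q) ≤ q * t :=
    calc ((c + t) ^ q - (c - t) ^ q) / ((c + t) ^ q + (c - t) ^ q)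
        = tanh (log ((c + t) / (c - t)) * q / 2) :=
          rpow_sub_rpow_div_rpow_add_rpow_eq_tanh (by linarith) hsub q
      _ ≤ tanh ((2 * q) * artanh (t / 2)) := tanh_monotone (by nlinarith)
      _ ≤ 2 * q * tanh (artanh (t / 2)) :=
          tanh_mul_le_mul_tanh (by linarith) (artanh_nonneg (by linarith))
      _ = q * t := by rw [tanh_artanh hx]; ring
  rwa [div_le_iff₀ (by positivity)] at htanh

lemma mul_rpow_add_sub_rpow_sub_le {q t c : ℝ} (hq : 1 / 2 ≤ q) (hc : 1 + t ^ 2 / 4 ≤ c) :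
    t * ((c + t) ^ q - (c - t) ^ q) ≤ q * t ^ 2 * ((c + t) ^ q + (c - t) ^ q) := by
  rcases le_total 0 t with ht | ht
  · nlinarith [mul_le_mul_of_nonneg_left (rpow_add_sub_rpow_sub_le hq ht hc) ht]
  · have hneg := rpow_add_sub_rpow_sub_le (t := -t) (c := c) hq (by linarith) (by linarith)
    rw [← sub_eq_add_neg, sub_neg_eq_add] at hneg
    nlinarith [mul_le_mul_of_nonneg_left hneg (neg_nonneg.2 ht)]

/-- The function of the theorem in the variable `s = √(1 - b)`. -/
noncomputable def weisslerSum (p u s : ℝ) : ℝ :=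
  (1 + (1 - s ^ 2) * u ^ 2 * (p - 2) + 2 * u * s) ^ (p / 2)
    + (1 + (1 - s ^ 2) * u ^ 2 * (p - 2) - 2 * u * s) ^ (p / 2)

lemma hasDerivAt_weisslerSum {p : ℝ} (hp : 2 ≤ p) (u s : ℝ) :
    HasDerivAt (weisslerSum p u)
      (-p * ((1 + (1 - s ^ 2) * u ^ 2 * (p - 2) + 2 * u * s) ^ (p / 2 - 1)
          * (s * u ^ 2 * (p - 2) - u)
        + (1 + (1 - s ^ 2) * u ^ 2 * (p - 2) - 2 * u * s) ^ (p / 2 - 1)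
          * (s * u ^ 2 * (p - 2) + u))) s := by
  have hc : HasDerivAt (fun s : ℝ => 1 + (1 - s ^ 2) * u ^ 2 * (p - 2))
      (-(2 * s * u ^ 2 * (p - 2))) s := by
    refine ((((hasDerivAt_pow 2 s).const_sub 1).mul_const (u ^ 2)).mul_const (p - 2)).const_add 1
      |>.congr_deriv ?_
    norm_num
  have hlin : HasDerivAt (fun s : ℝ => 2 * u * s) (2 * u) s := by
    simpa using (hasDerivAt_id s).const_mul (2 * u)
  have hp2 : 1 ≤ p / 2 := by linarith
  refine (((hc.add hlin).rpow_const (Or.inr hp2)).add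
    ((hc.sub hlin).rpow_const (Or.inr hp2))).congr_deriv ?_
  simp only [Pi.add_apply, Pi.sub_apply]
  ring

lemma weisslerSum_antitoneOn {p : ℝ} (hp : 3 ≤ p) (u : ℝ) :
    AntitoneOn (weisslerSum p u) (Icc 0 √(1 - 1 / (p - 1))) := by
  have hderiv := hasDerivAt_weisslerSum (by linarith : 2 ≤ p) u
  refine antitoneOn_of_hasDerivWithinAt_nonpos (convex_Icc _ _)
    (fun s _ => (hderiv s).continuousAt.continuousWithinAt)
    (fun s _ => (hderiv s).hasDerivWithinAt) fun s hs => ?_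
  rw [interior_Icc] at hs
  obtain ⟨hs0, hsS⟩ := hs
  have hs2 : s ^ 2 < 1 - 1 / (p - 1) := (lt_sqrt hs0.le).1 hsS
  rw [one_sub_div (by linarith), lt_div_iff₀ (by linarith)] at hs2
  have hc : 1 + (2 * u * s) ^ 2 / 4 ≤ 1 + (1 - s ^ 2) * u ^ 2 * (p - 2) := by
    nlinarith [sq_nonneg u]
  have hineq := mul_rpow_add_sub_rpow_sub_le (q := p / 2 - 1) (by linarith) hc
  set X := (1 + (1 - s ^ 2) * u ^ 2 * (p - 2) + 2 * u * s) ^ (p / 2 - 1)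
  set Y := (1 + (1 - s ^ 2) * u ^ 2 * (p - 2) - 2 * u * s) ^ (p / 2 - 1)
  have hE : 0 ≤ 2 * s * (X * (s * u ^ 2 * (p - 2) - u) + Y * (s * u ^ 2 * (p - 2) + u)) := by
    linear_combination hineq
  exact mul_nonpos_of_nonpos_of_nonneg (by linarith)
    (nonneg_of_mul_nonneg_right hE (by positivity))

theorem stmt_6 (p u : ℝ) (hp : 3 ≤ p) :
    MonotoneOn (fun b : ℝ =>
      (1 + b * u ^ 2 * (p - 2) + 2 * u * Real.sqrt (1 - b)) ^ (p / 2)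
        + (1 + b * u ^ 2 * (p - 2) - 2 * u * Real.sqrt (1 - b)) ^ (p / 2))
      (Set.Icc (1 / (p - 1)) 1) := by
  have hsubst {b : ℝ} (hb : b ≤ 1) :
      weisslerSum p u √(1 - b) = (1 + b * u ^ 2 * (p - 2) + 2 * u * √(1 - b)) ^ (p / 2)
        + (1 + b * u ^ 2 * (p - 2) - 2 * u * √(1 - b)) ^ (p / 2) := by
    rw [weisslerSum, sq_sqrt (by linarith), sub_sub_cancel]
  have hmaps {b : ℝ} (hb : b ∈ Icc (1 / (p - 1)) 1) :
      √(1 - b) ∈ Icc 0 √(1 - 1 / (p - 1)) :=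
    ⟨sqrt_nonneg _, sqrt_le_sqrt (by linarith [hb.1])⟩
  intro b hb b' hb' hbb'
  simp only [← hsubst hb.2, ← hsubst hb'.2]
  exact weisslerSum_antitoneOn hp u (hmaps hb') (hmaps hb) (sqrt_le_sqrt (by linarith))
end

section
/- Let f, g : ℝ → [0,∞) be continuous unimodal functions with f = 0 outside (a,b), g = 0 outside (a',b'), where a' ≤ a < b' ≤ b. Suppose x₀ ∈ (a, b') is a common global maximum point with f(x₀) = g(x₀), there exists c ∈ (x₀, b') with g ≥ f on [a', c] and g ≤ f on [c, b], and ∫_{x₀}^{b'} g ≥ ∫_{x₀}^{b} f. Then for every t ∈ [0, b-a], the maximum of ∫_I f over intervals I ⊆ [a,b] of length t is at most the maximum of ∫_I g over all intervals I ⊆ ℝ of length t. -/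
/-!
Sliding a window of fixed length towards the common mode `x₀` can only increase the integral of
the unimodal `f`, so it suffices to compare `∫ f` and `∫ g` over windows `[u, v] ∋ x₀` lying in
`[a', b]`. Left of `x₀` this is pointwise, since `f ≤ g` up to `c > x₀`. On `[x₀, v]` it is
pointwise too if `v ≤ c`; otherwise `∫_{x₀}^v (g - f) = ∫_{x₀}^b (g - f) - ∫_v^b (g - f) ≥ 0`,
by the area hypothesis (extended from `b'` to `b` using `g ≥ 0`) and `g ≤ f` on `[c, b]`.
-/

open Set MeasureTheory intervalIntegral

section Unimodal

variable {f g : ℝ → ℝ} {x₀ : ℝ}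

theorem intervalIntegrable_of_monotoneOn_antitoneOn (hmono : MonotoneOn f (Iic x₀))
    (hanti : AntitoneOn f (Ici x₀)) (u v : ℝ) : IntervalIntegrable f volume u v := by
  have from_x₀ : ∀ w, IntervalIntegrable f volume x₀ w := fun w => by
    rcases le_total w x₀ with h | h
    · exact (hmono.mono (uIcc_of_ge h ▸ Icc_subset_Iic_self)).intervalIntegrable
    · exact (hanti.mono (uIcc_of_le h ▸ Icc_subset_Ici_self)).intervalIntegrable
  exact (from_x₀ u).symm.trans (from_x₀ v)

theorem le_of_monotoneOn_antitoneOn (hmono : MonotoneOn f (Iic x₀))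
    (hanti : AntitoneOn f (Ici x₀)) (x : ℝ) : f x ≤ f x₀ := by
  rcases le_total x x₀ with h | h
  · exact hmono h self_mem_Iic h
  · exact hanti self_mem_Ici h h

theorem bddAbove_range_integral_window (hmono : MonotoneOn f (Iic x₀))
    (hanti : AntitoneOn f (Ici x₀)) {t : ℝ} (ht : 0 ≤ t) :
    BddAbove (range fun γ => ∫ x in γ..γ + t, f x) := by
  refine ⟨t * f x₀, forall_mem_range.2 fun γ => ?_⟩
  calc ∫ x in γ..γ + t, f x ≤ ∫ _ in γ..γ + t, f x₀ :=
        integral_mono_on (by linarith) (intervalIntegrable_of_monotoneOn_antitoneOn hmono hanti _ _)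
          intervalIntegrable_const fun x _ => le_of_monotoneOn_antitoneOn hmono hanti x
    _ = t * f x₀ := by simp

theorem integral_window_le_integral_shift (hf : ∀ u v, IntervalIntegrable f volume u v)
    {α t d : ℝ} (ht : 0 ≤ t) (h : ∀ x ∈ Icc α (α + t), f x ≤ f (x + d)) :
    ∫ x in α..α + t, f x ≤ ∫ x in α + d..α + d + t, f x := by
  rw [add_right_comm, ← integral_comp_add_right]
  refine integral_mono_on (by linarith) (hf _ _) ?_ h
  simpa using (hf (α + d) (α + t + d)).comp_add_right d

theorem integral_window_mono_of_monotoneOn (hmono : MonotoneOn f (Iic x₀))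
    (hf : ∀ u v, IntervalIntegrable f volume u v) {α β t : ℝ} (ht : 0 ≤ t) (hαβ : α ≤ β)
    (hβ : β + t ≤ x₀) : ∫ x in α..α + t, f x ≤ ∫ x in β..β + t, f x := by
  have key := integral_window_le_integral_shift hf (α := α) (d := β - α) ht fun x hx =>
    hmono (by simp only [mem_Iic]; linarith [hx.2]) (by simp only [mem_Iic]; linarith [hx.2])
      (by linarith)
  rwa [add_sub_cancel] at key

theorem integral_window_anti_of_antitoneOn (hanti : AntitoneOn f (Ici x₀))
    (hf : ∀ u v, IntervalIntegrable f volume u v) {α β t : ℝ} (ht : 0 ≤ t) (hβ : x₀ ≤ β)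
    (hβα : β ≤ α) : ∫ x in α..α + t, f x ≤ ∫ x in β..β + t, f x := by
  have key := integral_window_le_integral_shift hf (α := α) (d := β - α) ht fun x hx =>
    hanti (by simp only [mem_Ici]; linarith [hx.1]) (by simp only [mem_Ici]; linarith [hx.1])
      (by linarith)
  rwa [add_sub_cancel] at key

theorem exists_integral_window_le_of_monotoneOn_antitoneOn (hmono : MonotoneOn f (Iic x₀))
    (hanti : AntitoneOn f (Ici x₀)) {t : ℝ} (ht : 0 ≤ t) (α : ℝ) :
    ∃ β, min α x₀ ≤ β ∧ β ≤ x₀ ∧ x₀ ≤ β + t ∧ β + t ≤ max (α + t) x₀ ∧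
      ∫ x in α..α + t, f x ≤ ∫ x in β..β + t, f x := by
  have hf := intervalIntegrable_of_monotoneOn_antitoneOn hmono hanti
  rcases lt_or_ge x₀ α with hx₀α | hαx₀
  · refine ⟨x₀, min_le_right _ _, le_rfl, by linarith, by simp [hx₀α.le], ?_⟩
    exact integral_window_anti_of_antitoneOn hanti hf ht le_rfl hx₀α.le
  rcases lt_or_ge (α + t) x₀ with hαt | hx₀αt
  · refine ⟨x₀ - t, by simp [hαx₀]; linarith, by linarith, by linarith, by simp, ?_⟩
    exact integral_window_mono_of_monotoneOn hmono hf ht (by linarith) (by linarith)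
  · exact ⟨α, min_le_left _ _, hαx₀, hx₀αt, le_max_left _ _, le_rfl⟩

variable {b c : ℝ}

theorem integral_le_integral_of_single_crossing (hfi : ∀ u v, IntervalIntegrable f volume u v)
    (hgi : ∀ u v, IntervalIntegrable g volume u v) (hge : ∀ x ∈ Icc x₀ c, f x ≤ g x)
    (hle : ∀ x ∈ Icc c b, g x ≤ f x) (harea : ∫ x in x₀..b, f x ≤ ∫ x in x₀..b, g x)
    {v : ℝ} (hx₀v : x₀ ≤ v) (hvb : v ≤ b) : ∫ x in x₀..v, f x ≤ ∫ x in x₀..v, g x := by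
  rcases le_total v c with hvc | hcv
  · exact integral_mono_on hx₀v (hfi _ _) (hgi _ _) fun x hx => hge x ⟨hx.1, hx.2.trans hvc⟩
  have tail : ∫ x in v..b, g x ≤ ∫ x in v..b, f x :=
    integral_mono_on hvb (hgi _ _) (hfi _ _) fun x hx => hle x ⟨hcv.trans hx.1, hx.2⟩
  rw [← integral_add_adjacent_intervals (hfi x₀ v) (hfi v b),
    ← integral_add_adjacent_intervals (hgi x₀ v) (hgi v b)] at harea
  linarith

theorem integral_le_integral_of_crossing {a' u v : ℝ} (hfi : ∀ u v, IntervalIntegrable f volume u v)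
    (hgi : ∀ u v, IntervalIntegrable g volume u v) (hge : ∀ x ∈ Icc a' c, f x ≤ g x)
    (hle : ∀ x ∈ Icc c b, g x ≤ f x) (harea : ∫ x in x₀..b, f x ≤ ∫ x in x₀..b, g x)
    (hx₀c : x₀ ≤ c) (ha'u : a' ≤ u) (hux₀ : u ≤ x₀) (hx₀v : x₀ ≤ v) (hvb : v ≤ b) :
    ∫ x in u..v, f x ≤ ∫ x in u..v, g x := by
  rw [← integral_add_adjacent_intervals (hfi u x₀) (hfi x₀ v),
    ← integral_add_adjacent_intervals (hgi u x₀) (hgi x₀ v)]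
  gcongr ?_ + ?_
  · exact integral_mono_on hux₀ (hfi _ _) (hgi _ _) fun x hx =>
      hge x ⟨ha'u.trans hx.1, hx.2.trans hx₀c⟩
  · exact integral_le_integral_of_single_crossing hfi hgi
      (fun x hx => hge x ⟨ha'u.trans (hux₀.trans hx.1), hx.2⟩) hle harea hx₀v hvb

end Unimodal

theorem stmt_7_general (f g : ℝ → ℝ) (a b a' b' x₀ c : ℝ)
    (hg0 : ∀ x, 0 ≤ g x)
    (horder : a' ≤ a ∧ a < b' ∧ b' ≤ b)
    (hx₀ : x₀ ∈ Set.Ioo a b')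
    (hfmono : MonotoneOn f (Set.Iic x₀)) (hfanti : AntitoneOn f (Set.Ici x₀))
    (hgmono : MonotoneOn g (Set.Iic x₀)) (hganti : AntitoneOn g (Set.Ici x₀))
    (hc : c ∈ Set.Ioo x₀ b')
    (hge : ∀ x ∈ Set.Icc a' c, f x ≤ g x)
    (hle : ∀ x ∈ Set.Icc c b, g x ≤ f x)
    (harea : ∫ x in x₀..b, f x ≤ ∫ x in x₀..b', g x) :
    ∀ t ∈ Set.Icc (0:ℝ) (b - a), ∀ α : ℝ, a ≤ α → α + t ≤ b →
      (∫ x in α..(α + t), f x) ≤ ⨆ γ : ℝ, ∫ x in γ..(γ + t), g x := by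
  obtain ⟨ha'a, -, hb'b⟩ := horder
  have hfi := intervalIntegrable_of_monotoneOn_antitoneOn hfmono hfanti
  have hgi := intervalIntegrable_of_monotoneOn_antitoneOn hgmono hganti
  have harea' : ∫ x in x₀..b, f x ≤ ∫ x in x₀..b, g x := by
    rw [← integral_add_adjacent_intervals (hgi x₀ b') (hgi b' b)]
    linarith [integral_nonneg (μ := volume) hb'b fun x _ => hg0 x]
  intro t ht α haα hαb
  obtain ⟨β, hβ_ge, hβx₀, hx₀β, hβ_le, hslide⟩ :=
    exists_integral_window_le_of_monotoneOn_antitoneOn hfmono hfanti ht.1 α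
  calc ∫ x in α..α + t, f x ≤ ∫ x in β..β + t, f x := hslide
    _ ≤ ∫ x in β..β + t, g x :=
      integral_le_integral_of_crossing hfi hgi hge hle harea' hc.1.le
        (ha'a.trans ((le_min haα hx₀.1.le).trans hβ_ge)) hβx₀ hx₀β
        (hβ_le.trans (max_le hαb (hx₀.2.le.trans hb'b)))
    _ ≤ ⨆ γ, ∫ x in γ..γ + t, g x := le_ciSup (bddAbove_range_integral_window hgmono hganti ht.1) β

theorem stmt_7 (f g : ℝ → ℝ) (a b a' b' x₀ c : ℝ)
    (hf0 : ∀ x, 0 ≤ f x) (hg0 : ∀ x, 0 ≤ g x)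
    (hfc : Continuous f) (hgc : Continuous g)
    (hfsupp : ∀ x, x ∉ Set.Ioo a b → f x = 0)
    (hgsupp : ∀ x, x ∉ Set.Ioo a' b' → g x = 0)
    (horder : a' ≤ a ∧ a < b' ∧ b' ≤ b)
    (hx₀ : x₀ ∈ Set.Ioo a b')
    (hfmono : MonotoneOn f (Set.Iic x₀)) (hfanti : AntitoneOn f (Set.Ici x₀))
    (hgmono : MonotoneOn g (Set.Iic x₀)) (hganti : AntitoneOn g (Set.Ici x₀))
    (hmax : f x₀ = g x₀)
    (hc : c ∈ Set.Ioo x₀ b')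
    (hge : ∀ x ∈ Set.Icc a' c, f x ≤ g x)
    (hle : ∀ x ∈ Set.Icc c b, g x ≤ f x)
    (harea : ∫ x in x₀..b, f x ≤ ∫ x in x₀..b', g x) :
    ∀ t ∈ Set.Icc (0:ℝ) (b - a), ∀ α : ℝ, a ≤ α → α + t ≤ b →
      (∫ x in α..(α + t), f x) ≤ ⨆ γ : ℝ, ∫ x in γ..(γ + t), g x :=
  stmt_7_general f g a b a' b' x₀ c hg0 horder hx₀ hfmono hfanti hgmono hganti hc hge hle harea
end

section
/- Let 1 ≤ p ≤ q < ∞ and z ∈ ℂ. If for all a, b ∈ ℂ the two-point inequality ((|a+zb|^q + |a-zb|^q)/2)^{1/q} ≤ ((|a+b|^p + |a-b|^p)/2)^{1/p} holds, then |p - 2 - z²(q-2)| ≤ p - |z|²q. -/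
/-!
Test the two-point inequality at `a = 1`, `b = t v` and let `t → 0`. Both sides are
`1 + c t² + o(t²)`, where for exponent `r` and `w = v` resp. `w = z v` the coefficient is
`c = (‖w‖² + (r - 2) (Re w)²) / 2`: it comes from the second derivative at `0` of
`t ↦ ‖1 + t w‖ ^ r` (the first-order terms cancel in `‖1 + t w‖ ^ r + ‖1 - t w‖ ^ r`), and the
outer root `x ↦ x ^ (1 / r)` only contributes its derivative `1 / r` at `1`. Comparing the
coefficients gives `‖z v‖² + (q - 2) (Re z v)² ≤ ‖v‖² + (p - 2) (Re v)²` for every `v`. By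
`(Re w)² = (‖w‖² + Re w²) / 2`, for `‖v‖ = 1` this reads `q ‖z‖² - p ≤ Re (v² ζ)` with
`ζ = p - 2 - z² (q - 2)`, and `v` can be rotated so that `v² ζ = -‖ζ‖`.
-/

open Filter Topology Real

theorem tendsto_add_comp_neg_sub_div_sq {f f' : ℝ → ℝ} {L : ℝ}
    (hf : ∀ᶠ t in 𝓝 0, HasDerivAt f (f' t) t) (hf' : HasDerivAt f' L 0) :
    Tendsto (fun t => (f t + f (-t) - 2 * f 0) / t ^ 2) (𝓝[≠] 0) (𝓝 L) := by
  have hneg : Tendsto (fun t : ℝ => -t) (𝓝 0) (𝓝 0) := continuous_neg.tendsto' 0 0 neg_zero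
  have hslope := hasDerivAt_iff_tendsto_slope.mp hf'
  have hslope_neg : Tendsto (fun t => slope f' 0 (-t)) (𝓝[≠] 0) (𝓝 L) :=
    hslope.comp (hneg.inf (tendsto_principal_principal.2 fun _ => neg_ne_zero.2))
  refine HasDerivAt.lhopital_zero_nhdsNE (f' := fun t => f' t - f' (-t)) (g' := fun t => 2 * t)
    ?_ ?_ ?_ ?_ ?_ ?_
  · filter_upwards [nhdsWithin_le_nhds (hf.and (hneg.eventually hf))] with t ⟨h₁, h₂⟩
    simpa [sub_eq_add_neg] using ((h₁.add (h₂.comp t (hasDerivAt_neg t))).sub_const (2 * f 0))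
  · exact Eventually.of_forall fun t => by simpa using (hasDerivAt_pow 2 t)
  · filter_upwards [self_mem_nhdsWithin] with t ht
    simpa using ht
  · have hcont : ContinuousAt f 0 := hf.self_of_nhds.continuousAt
    have : Tendsto (fun t => f t + f (-t) - 2 * f 0) (𝓝 0) (𝓝 (f 0 + f 0 - 2 * f 0)) :=
      (hcont.tendsto.add (hcont.tendsto.comp hneg)).sub tendsto_const_nhds
    rw [← two_mul, sub_self] at this
    exact this.mono_left nhdsWithin_le_nhds
  · exact ((continuous_pow 2).tendsto' (0 : ℝ) 0 (by norm_num)).mono_left nhdsWithin_le_nhds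
  · -- `(f' t - f' (-t)) / (2 t)` is the mean of the slopes of `f'` at `0` towards `t` and `-t`
    rw [← add_self_div_two L]
    refine ((hslope.add hslope_neg).div_const 2).congr' ?_
    filter_upwards [self_mem_nhdsWithin] with t (ht : t ≠ 0)
    simp only [slope_def_field, sub_zero, div_neg]
    field_simp
    ring

theorem DifferentiableAt.tendsto_comp_sub_div {g φ d : ℝ → ℝ} {l : Filter ℝ} {a L : ℝ}
    (hg : DifferentiableAt ℝ g a) (hφ : Tendsto φ l (𝓝 a))
    (h : Tendsto (fun t => (φ t - a) / d t) l (𝓝 L)) :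
    Tendsto (fun t => (g (φ t) - g a) / d t) l (𝓝 (deriv g a * L)) := by
  -- `g y - g a = (y - a) * dslope g a y` holds also at `y = a`, where `dslope g a` is continuous
  have hdslope : Tendsto (fun t => dslope g a (φ t)) l (𝓝 (deriv g a)) := by
    rw [← dslope_same]
    exact (continuousAt_dslope_same.2 hg).tendsto.comp hφ
  refine (hdslope.mul h).congr fun t => ?_
  rw [← sub_smul_dslope g a (φ t), smul_eq_mul, mul_div_right_comm, mul_comm]

namespace Complex

theorem norm_one_add_ofReal_mul_sq (w : ℂ) (t : ℝ) :
    ‖1 + t * w‖ ^ 2 = 1 + 2 * w.re * t + ‖w‖ ^ 2 * t ^ 2 := by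
  simp only [Complex.sq_norm, normSq_apply, add_re, add_im, mul_re, mul_im, ofReal_re, ofReal_im,
    one_re, one_im]
  ring

theorem re_sq_eq (w : ℂ) : w.re ^ 2 = (‖w‖ ^ 2 + (w ^ 2).re) / 2 := by
  rw [Complex.sq_norm, normSq_apply, pow_two w, mul_re]
  ring

theorem exists_norm_eq_one_sq_mul_eq (ζ : ℂ) : ∃ v : ℂ, ‖v‖ = 1 ∧ v ^ 2 * ζ = -‖ζ‖ := by
  refine ⟨exp (((π - arg ζ) / 2 : ℝ) * I), norm_exp_ofReal_mul_I _, ?_⟩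
  nth_rw 2 [← norm_mul_exp_arg_mul_I ζ]
  rw [← exp_nat_mul, mul_left_comm, ← exp_add]
  have : (2 : ℕ) * (((π - arg ζ) / 2 : ℝ) * I) + arg ζ * I = π * I := by
    push_cast
    ring
  rw [this, exp_pi_mul_I, mul_neg_one]

end Complex

theorem tendsto_norm_one_add_rpow_second_diff (w : ℂ) (r : ℝ) :
    Tendsto (fun t : ℝ => (‖1 + t * w‖ ^ r + ‖1 - t * w‖ ^ r - 2) / t ^ 2) (𝓝[≠] 0)
      (𝓝 (r * (‖w‖ ^ 2 + (r - 2) * w.re ^ 2))) := by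
  set Q : ℝ → ℝ := fun t => 1 + 2 * w.re * t + ‖w‖ ^ 2 * t ^ 2
  have hQ : ∀ t, HasDerivAt Q (2 * w.re + 2 * ‖w‖ ^ 2 * t) t := fun t => by
    refine (((hasDerivAt_id t).const_mul (2 * w.re)).const_add 1 |>.add
      ((hasDerivAt_pow 2 t).const_mul (‖w‖ ^ 2))).congr_deriv ?_
    push_cast
    ring
  have hQ0 : Q 0 = 1 := by simp [Q]
  have hnorm : ∀ t : ℝ, ‖1 + t * w‖ ^ r = Q t ^ (r / 2) := fun t => by
    rw [show Q t = ‖1 + t * w‖ ^ 2 from (Complex.norm_one_add_ofReal_mul_sq w t).symm,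
      ← Real.rpow_natCast, ← Real.rpow_mul (norm_nonneg _), Nat.cast_ofNat,
      mul_div_cancel₀ r two_ne_zero]
  have hQpos : ∀ᶠ t in 𝓝 0, 0 < Q t :=
    (hQ 0).continuousAt.eventually (lt_mem_nhds (by rw [hQ0]; exact one_pos))
  set ψ' : ℝ → ℝ := fun t => (2 * w.re + 2 * ‖w‖ ^ 2 * t) * (r / 2) * Q t ^ (r / 2 - 1)
  have hψ : ∀ᶠ t in 𝓝 0, HasDerivAt (fun t => Q t ^ (r / 2)) (ψ' t) t := by
    filter_upwards [hQpos] with t ht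
    exact (hQ t).rpow_const (Or.inl ht.ne')
  have hψ' : HasDerivAt ψ' (r * (‖w‖ ^ 2 + (r - 2) * w.re ^ 2)) 0 := by
    have h₁ : HasDerivAt (fun t : ℝ => (2 * w.re + 2 * ‖w‖ ^ 2 * t) * (r / 2))
        (2 * ‖w‖ ^ 2 * (r / 2)) 0 := by
      simpa using (((hasDerivAt_id (0 : ℝ)).const_mul (2 * ‖w‖ ^ 2)).const_add
        (2 * w.re)).mul_const (r / 2)
    have h₂ := (hQ 0).rpow_const (p := r / 2 - 1) (Or.inl (by rw [hQ0]; exact one_ne_zero))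
    refine (h₁.mul h₂).congr_deriv ?_
    rw [hQ0, Real.one_rpow, Real.one_rpow]
    ring
  refine (tendsto_add_comp_neg_sub_div_sq hψ hψ').congr fun t => ?_
  have : (1 : ℂ) - t * w = 1 + ((-t : ℝ) : ℂ) * w := by push_cast; ring
  rw [this, hnorm, hnorm, hQ0, Real.one_rpow, mul_one]

noncomputable def twoPointNorm (r : ℝ) (a b : ℂ) : ℝ := ((‖a + b‖ ^ r + ‖a - b‖ ^ r) / 2) ^ (1 / r)

theorem tendsto_twoPointNorm_sub_one_div_sq (w : ℂ) {r : ℝ} (hr : r ≠ 0) :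
    Tendsto (fun t : ℝ => (twoPointNorm r 1 (t * w) - 1) / t ^ 2) (𝓝[≠] 0)
      (𝓝 ((‖w‖ ^ 2 + (r - 2) * w.re ^ 2) / 2)) := by
  set φ : ℝ → ℝ := fun t => (‖1 + t * w‖ ^ r + ‖1 - t * w‖ ^ r) / 2
  have hφ : Tendsto φ (𝓝[≠] 0) (𝓝 1) := by
    have hcont : ContinuousAt φ 0 := by
      have h₁ : ContinuousAt (fun t : ℝ => ‖1 + t * w‖ ^ r) 0 :=
        (by fun_prop : Continuous fun t : ℝ => ‖1 + t * w‖).continuousAt.rpow_const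
          (Or.inl (by simp))
      have h₂ : ContinuousAt (fun t : ℝ => ‖1 - t * w‖ ^ r) 0 :=
        (by fun_prop : Continuous fun t : ℝ => ‖1 - t * w‖).continuousAt.rpow_const
          (Or.inl (by simp))
      exact (h₁.add h₂).div_const 2
    simpa [φ] using hcont.tendsto.mono_left nhdsWithin_le_nhds
  have hratio : Tendsto (fun t => (φ t - 1) / t ^ 2) (𝓝[≠] 0)
      (𝓝 (r * (‖w‖ ^ 2 + (r - 2) * w.re ^ 2) / 2)) :=
    ((tendsto_norm_one_add_rpow_second_diff w r).div_const 2).congr fun t => by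
      simp only [φ]
      ring
  have hroot := (differentiableAt_rpow_const_of_ne (1 / r) one_ne_zero).tendsto_comp_sub_div
    hφ hratio
  rw [Real.deriv_rpow_const, Real.one_rpow, Real.one_rpow] at hroot
  convert hroot using 2
  · rfl
  · field_simp

theorem norm_sq_add_re_sq_le_of_twoPointNorm_le {p q : ℝ} {z : ℂ} (hp : p ≠ 0) (hq : q ≠ 0)
    (h : ∀ b : ℂ, twoPointNorm q 1 (z * b) ≤ twoPointNorm p 1 b) (v : ℂ) :
    ‖z * v‖ ^ 2 + (q - 2) * (z * v).re ^ 2 ≤ ‖v‖ ^ 2 + (p - 2) * v.re ^ 2 := by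
  have hle := le_of_tendsto_of_tendsto (tendsto_twoPointNorm_sub_one_div_sq (z * v) hq)
    (tendsto_twoPointNorm_sub_one_div_sq v hp) (Eventually.of_forall fun t => by
      dsimp only
      rw [mul_left_comm]
      gcongr
      exact h _)
  linarith

theorem stmt_14 (p q : ℝ) (z : ℂ) (hp : 1 ≤ p) (hpq : p ≤ q)
    (h : ∀ a b : ℂ,
      ((‖a + z * b‖ ^ q + ‖a - z * b‖ ^ q) / 2) ^ (1 / q)
        ≤ ((‖a + b‖ ^ p + ‖a - b‖ ^ p) / 2) ^ (1 / p)) :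
    ‖(p : ℂ) - 2 - z ^ 2 * ((q : ℂ) - 2)‖ ≤ p - ‖z‖ ^ 2 * q := by
  obtain ⟨v, hv, hvζ⟩ :=
    Complex.exists_norm_eq_one_sq_mul_eq ((p : ℂ) - 2 - z ^ 2 * ((q : ℂ) - 2))
  have hsecond := norm_sq_add_re_sq_le_of_twoPointNorm_le (by linarith) (by linarith)
    (h 1) v
  have hre : (p - 2) * (v ^ 2).re - (q - 2) * ((z * v) ^ 2).re
      = -‖(p : ℂ) - 2 - z ^ 2 * ((q : ℂ) - 2)‖ := by
    rw [← Complex.ofReal_re (-_), Complex.ofReal_neg, ← hvζ]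
    simp only [mul_pow, Complex.mul_re, Complex.mul_im, Complex.sub_re, Complex.sub_im,
      Complex.ofReal_re, Complex.ofReal_im, Complex.re_ofNat, Complex.im_ofNat]
    ring
  rw [Complex.re_sq_eq, Complex.re_sq_eq, norm_mul, hv] at hsecond
  linarith
end

section
/- Let p > 1 and z ∈ ℂ. Then |p - 2 - z²(p-2)| ≤ p - |z|²p if and only if both |z + i|p-2|/(2√(p-1))| ≤ p/(2√(p-1)) and |z - i|p-2|/(2√(p-1))| ≤ p/(2√(p-1)). -/
/-!
Put `a = |p - 2|` and `s = √(p - 1)`, so that `p² = a² + (2s)²`. Since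
`‖1 - z²‖² = (1 - ‖z‖²)² + 4 (Im z)²`, squaring turns `a ‖1 - z²‖ ≤ p (1 - ‖z‖²)` into
`|a Im z| ≤ s (1 - ‖z‖²)`. The two signs of this are the two disk conditions
`‖z ± i a/(2s)‖² ≤ (p/(2s))²`, because `(p/(2s))² - (a/(2s))² = 1`.
-/

open Complex

lemma Complex.norm_one_sub_sq_sq (z : ℂ) : ‖1 - z ^ 2‖ ^ 2 = (1 - ‖z‖ ^ 2) ^ 2 + 4 * z.im ^ 2 := by
  rw [Complex.sq_norm, Complex.sq_norm, normSq_apply, normSq_apply]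
  simp only [sub_re, sub_im, one_re, one_im, pow_two, mul_re, mul_im]
  ring

lemma Complex.norm_add_I_mul_sq (z : ℂ) (t : ℝ) :
    ‖z + I * t‖ ^ 2 = ‖z‖ ^ 2 + 2 * t * z.im + t ^ 2 := by
  simp only [Complex.sq_norm, Complex.normSq_apply, add_re, add_im, mul_re, mul_im, I_re, I_im,
    ofReal_re, ofReal_im]
  ring

lemma Complex.norm_add_I_mul_le_iff (z : ℂ) (t : ℝ) {R : ℝ} (hR : 0 ≤ R) :
    ‖z + I * t‖ ≤ R ↔ ‖z‖ ^ 2 + 2 * t * z.im + t ^ 2 ≤ R ^ 2 := by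
  rw [← norm_add_I_mul_sq, sq_le_sq₀ (norm_nonneg _) hR]

lemma mul_norm_one_sub_sq_le_iff {a s p : ℝ} (ha : 0 ≤ a) (hs : 0 < s) (hp : 0 ≤ p)
    (hpyth : p ^ 2 = a ^ 2 + 4 * s ^ 2) (z : ℂ) :
    a * ‖1 - z ^ 2‖ ≤ p * (1 - ‖z‖ ^ 2) ↔ |a * z.im| ≤ s * (1 - ‖z‖ ^ 2) := by
  rcases lt_or_ge (1 - ‖z‖ ^ 2) 0 with hout | hin
  · have hp_pos : 0 < p := by nlinarith
    exact iff_of_false (fun h ↦ by nlinarith [mul_nonneg ha (norm_nonneg (1 - z ^ 2))])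
      (fun h ↦ by nlinarith [abs_nonneg (a * z.im)])
  rw [← sq_le_sq₀ (by positivity : 0 ≤ a * ‖1 - z ^ 2‖) (by positivity),
    ← sq_le_sq₀ (abs_nonneg (a * z.im)) (by positivity), mul_pow, norm_one_sub_sq_sq, sq_abs,
    mul_pow, mul_pow, hpyth]
  constructor <;> intro h <;> linarith

lemma abs_mul_im_le_iff_norm_add_sub_I_mul_le {a s p : ℝ} (hs : 0 < s) (hp : 0 ≤ p)
    (hpyth : p ^ 2 = a ^ 2 + 4 * s ^ 2) (z : ℂ) :
    |a * z.im| ≤ s * (1 - ‖z‖ ^ 2) ↔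
      ‖z + I * ↑(a / (2 * s))‖ ≤ p / (2 * s) ∧ ‖z - I * ↑(a / (2 * s))‖ ≤ p / (2 * s) := by
  have hR : 0 ≤ p / (2 * s) := by positivity
  have hsub : z - I * ↑(a / (2 * s)) = z + I * ↑(-(a / (2 * s))) := by
    push_cast
    ring
  rw [hsub, norm_add_I_mul_le_iff _ _ hR, norm_add_I_mul_le_iff _ _ hR, abs_le]
  have key : (p / (2 * s)) ^ 2 = (a / (2 * s)) ^ 2 + 1 := by
    field_simp
    linarith
  have linear_part : ∀ c : ℝ, 2 * (c / (2 * s)) * z.im = c * z.im / s := fun c ↦ by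
    field_simp
  have half_plane : ∀ b : ℝ,
      ‖z‖ ^ 2 + b / s + (a / (2 * s)) ^ 2 ≤ (a / (2 * s)) ^ 2 + 1 ↔ b ≤ s * (1 - ‖z‖ ^ 2) :=
    fun b ↦ by
      rw [← div_le_iff₀' hs]
      constructor <;> intro h <;> linarith
  rw [key, neg_sq, mul_neg, neg_mul, linear_part, ← neg_div, half_plane, half_plane, neg_le,
    and_comm]

theorem stmt_15 (p : ℝ) (hp : 1 < p) (z : ℂ) :
    ‖(p : ℂ) - 2 - z ^ 2 * ((p : ℂ) - 2)‖ ≤ p - ‖z‖ ^ 2 * p ↔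
      (‖z + Complex.I * (|p - 2| / (2 * Real.sqrt (p - 1)))‖ ≤ p / (2 * Real.sqrt (p - 1)) ∧
       ‖z - Complex.I * (|p - 2| / (2 * Real.sqrt (p - 1)))‖ ≤ p / (2 * Real.sqrt (p - 1))) := by
  have hs : 0 < √(p - 1) := Real.sqrt_pos.2 (by linarith)
  have hpyth : p ^ 2 = |p - 2| ^ 2 + 4 * √(p - 1) ^ 2 := by
    rw [sq_abs, Real.sq_sqrt (by linarith)]
    ring
  have hfactor : (p : ℂ) - 2 - z ^ 2 * ((p : ℂ) - 2) = ((p - 2 : ℝ) : ℂ) * (1 - z ^ 2) := by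
    push_cast
    ring
  have lens := abs_mul_im_le_iff_norm_add_sub_I_mul_le hs (by linarith) hpyth z
  push_cast at lens
  rw [hfactor, norm_mul, norm_real, Real.norm_eq_abs, ← lens,
    show p - ‖z‖ ^ 2 * p = p * (1 - ‖z‖ ^ 2) by ring]
  exact mul_norm_one_sub_sq_le_iff (abs_nonneg _) hs (by linarith) hpyth z
end

section
/- Fix p ≥ 2 and for t ∈ ℝ let c(t) ≥ 1 be such that the inequality |1+c(t)y e^{i(t+a)}|^p + |1-c(t)y e^{i(t+a)}|^p ≥ |1+y e^{ia}|^p + |1-y e^{ia}|^p holds for all a ∈ ℝ and all y with 0 ≤ c(t)·y ≤ 1. Then the same inequality holds for all y ≥ 0 (with the same t, for all a). -/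
/-!
Write `T_p(x, A) = (1 + x² + 2xA)^{p/2} + (1 + x² - 2xA)^{p/2}`, so that
`|1 + x e^{iθ}|^p + |1 - x e^{iθ}|^p = T_p(x, cos θ)`. The inversion symmetry
`T_p(x, A) = x^p T_p(1/x, A)` turns the hypothesis at `z = 1/(c²y)` (where `cz = 1/(cy) ≤ 1`)
into `T_p(c²y, A) ≤ c^p T_p(cy, B)`. Finally `c^p T_p(y, A) ≤ T_p(c²y, A)`: both sides have the
form `(s + 2c²yA)^{p/2} + (s - 2c²yA)^{p/2}`, and the `s` on the right exceeds the one on the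
left by `(c² - 1)(c²y² - 1) ≥ 0`.
-/

open Real

lemma sq_rpow_half (p : ℝ) {x : ℝ} (hx : 0 ≤ x) : (x ^ 2) ^ (p / 2) = x ^ p := by
  rw [← rpow_natCast, ← rpow_mul hx]
  congr 1; ring

noncomputable def twoPointSum (p x A : ℝ) : ℝ :=
  (1 + x ^ 2 + 2 * x * A) ^ (p / 2) + (1 + x ^ 2 - 2 * x * A) ^ (p / 2)

lemma norm_one_add_mul_exp_rpow (p x θ : ℝ) :
    ‖1 + (x : ℂ) * Complex.exp (Complex.I * θ)‖ ^ p = (1 + x ^ 2 + 2 * x * cos θ) ^ (p / 2) := by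
  have hsq : ‖1 + (x : ℂ) * Complex.exp (Complex.I * θ)‖ ^ 2 = 1 + x ^ 2 + 2 * x * cos θ := by
    rw [mul_comm Complex.I, Complex.exp_mul_I, Complex.sq_norm, Complex.normSq_apply]
    simp [Complex.cos_ofReal_re, Complex.sin_ofReal_re]
    nlinarith [sin_sq_add_cos_sq θ]
  rw [← hsq, sq_rpow_half p (norm_nonneg _)]

lemma norm_rpow_add_norm_rpow_eq_twoPointSum (p x θ : ℝ) :
    ‖1 + (x : ℂ) * Complex.exp (Complex.I * θ)‖ ^ p
      + ‖1 - (x : ℂ) * Complex.exp (Complex.I * θ)‖ ^ p = twoPointSum p x (cos θ) := by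
  have hneg : (1 : ℂ) - x * Complex.exp (Complex.I * θ)
      = 1 + ((-x : ℝ) : ℂ) * Complex.exp (Complex.I * θ) := by
    push_cast; ring
  rw [hneg, norm_one_add_mul_exp_rpow, norm_one_add_mul_exp_rpow, twoPointSum]
  ring_nf

lemma one_add_sq_add_two_mul_nonneg (x : ℝ) {A : ℝ} (hA : |A| ≤ 1) :
    0 ≤ 1 + x ^ 2 + 2 * x * A := by
  obtain ⟨hA₁, hA₂⟩ := abs_le.mp hA
  nlinarith [sq_nonneg (1 - x), sq_nonneg (1 + x)]

lemma one_add_sq_sub_two_mul_nonneg (x : ℝ) {A : ℝ} (hA : |A| ≤ 1) :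
    0 ≤ 1 + x ^ 2 - 2 * x * A := by
  simpa [sub_eq_add_neg, mul_neg] using
    one_add_sq_add_two_mul_nonneg x (A := -A) (by rwa [abs_neg])

lemma twoPointSum_eq_rpow_mul_inv (p : ℝ) {x A : ℝ} (hx : 0 < x) (hA : |A| ≤ 1) :
    twoPointSum p x A = x ^ p * twoPointSum p x⁻¹ A := by
  have hx2 : 0 ≤ x ^ 2 := sq_nonneg x
  rw [← sq_rpow_half p hx.le, twoPointSum, twoPointSum, mul_add,
    ← mul_rpow hx2 (one_add_sq_add_two_mul_nonneg _ hA),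
    ← mul_rpow hx2 (one_add_sq_sub_two_mul_nonneg _ hA)]
  congr 2 <;> field_simp <;> ring

lemma rpow_mul_twoPointSum_le {p c y A : ℝ} (hp : 0 ≤ p) (hc : 1 ≤ c) (hcy : 1 ≤ c * y)
    (hA : |A| ≤ 1) : c ^ p * twoPointSum p y A ≤ twoPointSum p (c ^ 2 * y) A := by
  have hc2 : 0 ≤ c ^ 2 := sq_nonneg c
  have hgap : 0 ≤ (c ^ 2 - 1) * ((c * y) ^ 2 - 1) := by
    apply mul_nonneg <;> nlinarith
  rw [← sq_rpow_half p (by linarith : 0 ≤ c), twoPointSum, twoPointSum, mul_add,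
    ← mul_rpow hc2 (one_add_sq_add_two_mul_nonneg _ hA),
    ← mul_rpow hc2 (one_add_sq_sub_two_mul_nonneg _ hA)]
  gcongr
  · exact mul_nonneg hc2 (one_add_sq_add_two_mul_nonneg _ hA)
  · nlinarith
  · exact mul_nonneg hc2 (one_add_sq_sub_two_mul_nonneg _ hA)
  · nlinarith

lemma twoPointSum_le_of_le_at_inv {p c y A B : ℝ} (hp : 0 ≤ p) (hc : 1 ≤ c) (hcy : 1 < c * y)
    (hA : |A| ≤ 1) (hB : |B| ≤ 1)
    (H : twoPointSum p (c ^ 2 * y)⁻¹ A ≤ twoPointSum p (c * (c ^ 2 * y)⁻¹) B) :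
    twoPointSum p y A ≤ twoPointSum p (c * y) B := by
  have hc0 : 0 < c := by linarith
  have hcy0 : 0 < c * y := by linarith
  have hw : c ^ 2 * y = c * (c * y) := by ring
  have hz : c * (c ^ 2 * y)⁻¹ = (c * y)⁻¹ := by field_simp
  rw [hz] at H
  refine le_of_mul_le_mul_left ?_ (rpow_pos_of_pos hc0 p)
  calc c ^ p * twoPointSum p y A
      ≤ twoPointSum p (c ^ 2 * y) A := rpow_mul_twoPointSum_le hp hc hcy.le hA
    _ = (c ^ 2 * y) ^ p * twoPointSum p (c ^ 2 * y)⁻¹ A :=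
        twoPointSum_eq_rpow_mul_inv p (by rw [hw]; positivity) hA
    _ ≤ (c ^ 2 * y) ^ p * twoPointSum p (c * y)⁻¹ B := by
        gcongr
        rw [hw]; positivity
    _ = c ^ p * twoPointSum p (c * y) B := by
        rw [hw, mul_rpow hc0.le hcy0.le, mul_assoc,
          ← twoPointSum_eq_rpow_mul_inv p hcy0 hB]

theorem stmt_19 (p t c : ℝ) (hp : 2 ≤ p) (hc : 1 ≤ c)
    (h : ∀ a y : ℝ, 0 ≤ y → c * y ≤ 1 →
      ‖1 + (y : ℂ) * Complex.exp (Complex.I * a)‖ ^ p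
        + ‖1 - (y : ℂ) * Complex.exp (Complex.I * a)‖ ^ p
      ≤ ‖1 + (c : ℂ) * y * Complex.exp (Complex.I * (t + a))‖ ^ p
        + ‖1 - (c : ℂ) * y * Complex.exp (Complex.I * (t + a))‖ ^ p) :
    ∀ a y : ℝ, 0 ≤ y →
      ‖1 + (y : ℂ) * Complex.exp (Complex.I * a)‖ ^ p
        + ‖1 - (y : ℂ) * Complex.exp (Complex.I * a)‖ ^ p
      ≤ ‖1 + (c : ℂ) * y * Complex.exp (Complex.I * (t + a))‖ ^ p
        + ‖1 - (c : ℂ) * y * Complex.exp (Complex.I * (t + a))‖ ^ p := by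
  have hcast : ∀ a x : ℝ, (c : ℂ) * x * Complex.exp (Complex.I * (t + a))
      = ((c * x : ℝ) : ℂ) * Complex.exp (Complex.I * ((t + a : ℝ) : ℂ)) := by
    intros; push_cast; ring
  simp only [hcast, norm_rpow_add_norm_rpow_eq_twoPointSum] at h ⊢
  intro a y hy
  rcases le_or_gt (c * y) 1 with hcy | hcy
  · exact h a y hy hcy
  have hc0 : 0 < c := by linarith
  have hy0 : 0 < y := pos_of_mul_pos_right (by linarith) hc0.le
  refine twoPointSum_le_of_le_at_inv (by linarith) hc hcy (abs_cos_le_one a)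
    (abs_cos_le_one (t + a)) (h a _ (by positivity) ?_)
  rw [show c * (c ^ 2 * y)⁻¹ = (c * y)⁻¹ by field_simp]
  exact inv_le_one_of_one_le₀ hcy.le
end
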